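/- arXiv:1010.4408 — 2 statements merged into one kernel-verified Lean document; each statement's English description precedes it below -/
import Mathlib

section
/- Multiplicative Weights regret with quadratic correction: Let q₁,…,q_T ∈ ℝⁿ and η > 0. Define w₁ = (1,…,1) ∈ ℝⁿ, p_t = w_t/‖w_t‖₁, and w_{t+1}(i) = w_t(i)(1 - η q_t(i) + η² q_t(i)²). Assume all w_t(i) > 0 (e.g., 1 - η q_t(i) + η² q_t(i)² > 0, which holds automatically since 1 + z + z² > 0 for all real z with z = -η q_t(i)). Then ∑_{t=1}^T ⟨p_t, q_t⟩ ≤ min_{i∈[n]} ∑_{t=1}^T max(q_t(i), -1/η) + (log n)/η + η ∑_{t=1}^T ⟨p_t, q_t²⟩, where q_t² denotes the vector of squared entries. -/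
open Finset

lemma exp_min_le_quadratic (z : ℝ) : Real.exp (min z 1) ≤ 1 + z + z ^ 2 := by
  rcases le_total 1 z with h1 | h1
  · rw [min_eq_right h1]
    have := Real.exp_one_lt_d9
    nlinarith
  · rw [min_eq_left h1]
    rcases le_total (-1) z with h2 | h2
    · have hx : |z| ≤ 1 := abs_le.2 ⟨h2, h1⟩
      have h := Real.exp_bound hx (n := 2) (by norm_num)
      have h' := (abs_sub_le_iff.1 h).1
      simp [Finset.sum_range_succ] at h'
      have hz2 : |z| ^ 2 = z ^ 2 := by rw [sq_abs]
      nlinarith [h']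
    · have : Real.exp z < 1 := Real.exp_lt_one_iff.2 (by linarith)
      nlinarith

/-- Multiplicative Weights regret bound with quadratic correction (Variance MW Lemma). -/
theorem mw_variance_regret (n T : ℕ) (hn : 0 < n) (q : Fin T → Fin n → ℝ)
    (η : ℝ) (hη : 0 < η) (w : ℕ → Fin n → ℝ) (p : Fin T → Fin n → ℝ)
    (hw0 : ∀ i, w 0 i = 1)
    (hwrec : ∀ (t : Fin T) (i : Fin n),
      w (t + 1) i = w t i * (1 - η * q t i + η ^ 2 * (q t i) ^ 2))
    (hp : ∀ (t : Fin T) (i : Fin n), p t i = w t i / ∑ j, w t j)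
    (hpos : ∀ (t : ℕ) (i : Fin n), 0 < w t i) :
    ∑ t : Fin T, ∑ i, p t i * q t i ≤
      (Finset.univ.inf' ⟨⟨0, hn⟩, Finset.mem_univ _⟩
        fun i => ∑ t : Fin T, max (q t i) (-1 / η)) +
      Real.log n / η + η * ∑ t : Fin T, ∑ i, p t i * (q t i) ^ 2 := by
  -- total weight
  set W : ℕ → ℝ := fun t => ∑ j, w t j with hW
  have hWpos : ∀ t, 0 < W t := fun t =>
    Finset.sum_pos (fun j _ => hpos t j) (univ_nonempty_iff.2 ⟨⟨0, hn⟩⟩)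
  -- losses / variances as functions on ℕ (0 outside range)
  set S : ℕ → ℝ := fun t => if h : t < T then ∑ i, p ⟨t, h⟩ i * q ⟨t, h⟩ i else 0 with hS
  set V : ℕ → ℝ := fun t => if h : t < T then ∑ i, p ⟨t, h⟩ i * (q ⟨t, h⟩ i) ^ 2 else 0 with hV
  -- upper bound on log of total weight
  have key : ∀ m, m ≤ T →
      Real.log (W m) ≤ Real.log n + ∑ t ∈ Finset.range m, (-η * S t + η ^ 2 * V t) := by
    intro m hm
    induction m with
    | zero =>
      simp [hW, hw0]
    | succ m ih =>
      have hmT : m < T := hm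
      have ih' := ih (le_of_lt hmT)
      have hrec : W (m + 1) = W m * (1 - η * S m + η ^ 2 * V m) := by
        have hWne : W m ≠ 0 := (hWpos m).ne'
        simp only [hS, hV, dif_pos hmT]
        have : ∀ i : Fin n, p ⟨m, hmT⟩ i = w m i / W m := fun i => hp ⟨m, hmT⟩ i
        have hA : ∑ i, p ⟨m, hmT⟩ i * q ⟨m, hmT⟩ i
            = (∑ i, w m i * q ⟨m, hmT⟩ i) / W m := by
          rw [Finset.sum_div]
          exact Finset.sum_congr rfl fun i _ => by rw [this i]; ring
        have hB : ∑ i, p ⟨m, hmT⟩ i * (q ⟨m, hmT⟩ i) ^ 2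
            = (∑ i, w m i * (q ⟨m, hmT⟩ i) ^ 2) / W m := by
          rw [Finset.sum_div]
          exact Finset.sum_congr rfl fun i _ => by rw [this i]; ring
        calc W (m + 1) = ∑ i, w m i * (1 - η * q ⟨m, hmT⟩ i + η ^ 2 * (q ⟨m, hmT⟩ i) ^ 2) := by
              refine Finset.sum_congr rfl fun i _ => ?_
              exact hwrec ⟨m, hmT⟩ i
          _ = W m - η * ∑ i, w m i * q ⟨m, hmT⟩ i
                + η ^ 2 * ∑ i, w m i * (q ⟨m, hmT⟩ i) ^ 2 := by
              simp only [hW, Finset.mul_sum]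
              rw [← Finset.sum_sub_distrib, ← Finset.sum_add_distrib]
              exact Finset.sum_congr rfl fun i _ => by ring
          _ = W m * (1 - η * ∑ i, p ⟨m, hmT⟩ i * q ⟨m, hmT⟩ i
                + η ^ 2 * ∑ i, p ⟨m, hmT⟩ i * (q ⟨m, hmT⟩ i) ^ 2) := by
              rw [hA, hB]
              field_simp
      have hle : W (m + 1) ≤ W m * Real.exp (-η * S m + η ^ 2 * V m) := by
        rw [hrec]
        have h1 : 1 + (-η * S m + η ^ 2 * V m) ≤ Real.exp (-η * S m + η ^ 2 * V m) := by
          linarith [Real.add_one_le_exp (-η * S m + η ^ 2 * V m)]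
        have := hWpos m
        nlinarith
      calc Real.log (W (m + 1)) ≤ Real.log (W m * Real.exp (-η * S m + η ^ 2 * V m)) :=
            Real.log_le_log (hWpos (m + 1)) hle
        _ = Real.log (W m) + (-η * S m + η ^ 2 * V m) := by
            rw [Real.log_mul (hWpos m).ne' (Real.exp_ne_zero _), Real.log_exp]
        _ ≤ Real.log n + ∑ t ∈ Finset.range m, (-η * S t + η ^ 2 * V t)
              + (-η * S m + η ^ 2 * V m) := by linarith
        _ = Real.log n + ∑ t ∈ Finset.range (m + 1), (-η * S t + η ^ 2 * V t) := by
            rw [Finset.sum_range_succ]; ring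
  -- lower bound on log of each weight
  have lower : ∀ i : Fin n, ∀ m, m ≤ T →
      (∑ t ∈ Finset.range m, if h : t < T then min (-η * q ⟨t, h⟩ i) 1 else 0)
        ≤ Real.log (w m i) := by
    intro i m hm
    induction m with
    | zero => simp [hw0]
    | succ m ih =>
      have hmT : m < T := hm
      have ih' := ih (le_of_lt hmT)
      rw [Finset.sum_range_succ, dif_pos hmT]
      have hrec := hwrec ⟨m, hmT⟩ i
      have hq : Real.exp (min (-η * q ⟨m, hmT⟩ i) 1)
          ≤ 1 - η * q ⟨m, hmT⟩ i + η ^ 2 * (q ⟨m, hmT⟩ i) ^ 2 := by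
        have := exp_min_le_quadratic (-η * q ⟨m, hmT⟩ i)
        nlinarith
      have hfpos : (0:ℝ) < 1 - η * q ⟨m, hmT⟩ i + η ^ 2 * (q ⟨m, hmT⟩ i) ^ 2 :=
        lt_of_lt_of_le (Real.exp_pos _) hq
      have hlog : min (-η * q ⟨m, hmT⟩ i) 1
          ≤ Real.log (1 - η * q ⟨m, hmT⟩ i + η ^ 2 * (q ⟨m, hmT⟩ i) ^ 2) := by
        rw [← Real.log_exp (min (-η * q ⟨m, hmT⟩ i) 1)]
        exact Real.log_le_log (Real.exp_pos _) hq
      have : Real.log (w (m + 1) i)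
          = Real.log (w m i) + Real.log (1 - η * q ⟨m, hmT⟩ i + η ^ 2 * (q ⟨m, hmT⟩ i) ^ 2) := by
        rw [hrec, Real.log_mul (hpos m i).ne' hfpos.ne']
      linarith
  -- pick the minimizing index
  obtain ⟨i₀, -, hi₀⟩ := Finset.exists_mem_eq_inf' (⟨⟨0, hn⟩, Finset.mem_univ _⟩ :
      (Finset.univ : Finset (Fin n)).Nonempty) (fun i => ∑ t : Fin T, max (q t i) (-1 / η))
  have hwleW : Real.log (w T i₀) ≤ Real.log (W T) :=
    Real.log_le_log (hpos T i₀) (Finset.single_le_sum (fun j _ => (hpos T j).le)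
      (Finset.mem_univ i₀))
  have hchain := (lower i₀ T le_rfl).trans (hwleW.trans (key T le_rfl))
  -- rewrite the min as -η * max
  have hminmax : ∀ (a : ℝ), min (-η * a) 1 = -η * max a (-1 / η) := by
    intro a
    have hc : η * (-1 / η) = -1 := by field_simp
    rcases le_total a (-1 / η) with h | h
    · rw [max_eq_right h, min_eq_right
        (by nlinarith [mul_le_mul_of_nonneg_left h hη.le])]
      field_simp
    · rw [max_eq_left h, min_eq_left
        (by nlinarith [mul_le_mul_of_nonneg_left h hη.le])]
  -- convert range sums to Fin sums
  have hsum1 : (∑ t ∈ Finset.range T, if h : t < T then min (-η * q ⟨t, h⟩ i₀) 1 else 0)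
      = -η * ∑ t : Fin T, max (q t i₀) (-1 / η) := by
    rw [Finset.mul_sum, ← Fin.sum_univ_eq_sum_range
      (fun t => if h : t < T then min (-η * q ⟨t, h⟩ i₀) 1 else 0)]
    exact Finset.sum_congr rfl fun t _ => by
      rw [dif_pos t.isLt, hminmax]
  have hsum2 : (∑ t ∈ Finset.range T, (-η * S t + η ^ 2 * V t))
      = -η * (∑ t : Fin T, ∑ i, p t i * q t i)
        + η ^ 2 * ∑ t : Fin T, ∑ i, p t i * (q t i) ^ 2 := by
    rw [Finset.mul_sum, Finset.mul_sum, ← Finset.sum_add_distrib,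
      ← Fin.sum_univ_eq_sum_range (fun t => -η * S t + η ^ 2 * V t)]
    refine Finset.sum_congr rfl fun t _ => ?_
    simp only [hS, hV, dif_pos t.isLt]
  rw [hsum1, hsum2] at hchain
  rw [hi₀]
  nlinarith [hchain, div_mul_cancel₀ (Real.log n) hη.ne', hη]
end

section
/- MEB of a symmetric simplex configuration: Let T > t ≥ 1 and α ≥ β ≥ 0. Consider the t points in ℝ^T given by v_i = α e_i + β ∑_{j∈[t], j≠i} e_j for i = 1,…,t, where e_1,…,e_t are distinct standard unit vectors. Then the point x* = ((α + (t-1)β)/t)·∑_{i=1}^t e_i is a center of the minimum enclosing ball of {v_1,…,v_t}, and the minimum over all x ∈ ℝ^T of max_i ‖x - v_i‖² equals (α - β)²·(1 - 1/t). -/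
/-!
The point `x*` is the centroid of the `v i`, and `x* - v i = (α - β) • (t⁻¹ • ∑ j, e_j - e_i)`,
whose squared norm is `(α - β)² (1 - 1/t)` by orthonormality. Since the `v i` average to `x*`,
for every `x` we have `∑ i, ‖x - v i‖² = t ‖x - x*‖² + ∑ i, ‖x* - v i‖²`, so the mean, and
hence the maximum, of the `‖x - v i‖²` is at least `(α - β)² (1 - 1/t)`.
-/

open Finset

open scoped RealInnerProductSpace

section Centroid

variable {ι E : Type*} [NormedAddCommGroup E] [InnerProductSpace ℝ E]

theorem sum_norm_sub_sq_eq_of_sum_sub_eq_zero (s : Finset ι) (v : ι → E) {c : E}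
    (hc : ∑ i ∈ s, (c - v i) = 0) (x : E) :
    ∑ i ∈ s, ‖x - v i‖ ^ 2 = #s * ‖x - c‖ ^ 2 + ∑ i ∈ s, ‖c - v i‖ ^ 2 := by
  have hsplit : ∀ i, ‖x - v i‖ ^ 2 = ‖x - c‖ ^ 2 + 2 * ⟪x - c, c - v i⟫ + ‖c - v i‖ ^ 2 :=
    fun i => by rw [← norm_add_sq_real, sub_add_sub_cancel]
  simp_rw [hsplit, sum_add_distrib, ← mul_sum, ← inner_sum, hc, inner_zero_right, mul_zero,
    add_zero, sum_const, nsmul_eq_mul]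

theorem le_sup'_norm_sub_sq_of_sum_sub_eq_zero {s : Finset ι} (hs : s.Nonempty) (v : ι → E)
    {c : E} (hc : ∑ i ∈ s, (c - v i) = 0) {r : ℝ} (hr : ∀ i ∈ s, ‖c - v i‖ ^ 2 = r) (x : E) :
    r ≤ s.sup' hs fun i => ‖x - v i‖ ^ 2 := by
  have hcard : (0 : ℝ) < #s := by exact_mod_cast hs.card_pos
  refine le_of_mul_le_mul_left ?_ hcard
  calc (#s : ℝ) * r ≤ #s * ‖x - c‖ ^ 2 + ∑ i ∈ s, ‖c - v i‖ ^ 2 := by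
        rw [sum_congr rfl hr, sum_const, nsmul_eq_mul]; nlinarith [sq_nonneg ‖x - c‖]
    _ = ∑ i ∈ s, ‖x - v i‖ ^ 2 := (sum_norm_sub_sq_eq_of_sum_sub_eq_zero s v hc x).symm
    _ ≤ ∑ _i ∈ s, s.sup' hs fun i => ‖x - v i‖ ^ 2 :=
        sum_le_sum fun i hi => le_sup' (fun i => ‖x - v i‖ ^ 2) hi
    _ = #s * s.sup' hs fun i => ‖x - v i‖ ^ 2 := by rw [sum_const, nsmul_eq_mul]

end Centroid

theorem sum_inv_card_smul_sum_sub_eq_zero {ι E : Type*} [Fintype ι] [Nonempty ι]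
    [AddCommGroup E] [Module ℝ E] (v : ι → E) :
    ∑ i, ((Fintype.card ι : ℝ)⁻¹ • ∑ j, v j - v i) = 0 := by
  rw [sum_sub_distrib, sum_const, card_univ, ← Nat.cast_smul_eq_nsmul ℝ, smul_smul,
    mul_inv_cancel₀ (by positivity), one_smul, sub_self]

namespace Orthonormal

variable {ι E : Type*} [Fintype ι] [NormedAddCommGroup E] [InnerProductSpace ℝ E] {b : ι → E}

theorem inner_sum_left_eq_one (hb : Orthonormal ℝ b) (i : ι) : ⟪∑ j, b j, b i⟫ = 1 := by
  classical
  simp [sum_inner, orthonormal_iff_ite.mp hb]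

theorem norm_sum_sq (hb : Orthonormal ℝ b) : ‖∑ j, b j‖ ^ 2 = Fintype.card ι := by
  rw [← real_inner_self_eq_norm_sq, inner_sum]
  simp [hb.inner_sum_left_eq_one]

theorem norm_inv_card_smul_sum_sub_sq (hb : Orthonormal ℝ b) (i : ι) :
    ‖(Fintype.card ι : ℝ)⁻¹ • ∑ j, b j - b i‖ ^ 2 = 1 - 1 / Fintype.card ι := by
  have : Nonempty ι := ⟨i⟩
  have hcard : (Fintype.card ι : ℝ) ≠ 0 := by positivity
  rw [norm_sub_sq_real, norm_smul, mul_pow, real_inner_smul_left, hb.norm_sum_sq,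
    hb.inner_sum_left_eq_one, hb.1 i, Real.norm_eq_abs, sq_abs]
  field_simp
  ring

end Orthonormal

theorem meb_symmetric_simplex_general (t T : ℕ) (ht : 0 < t) (α β : ℝ)
    (e : Fin t → Fin T) (he : Function.Injective e)
    (v : Fin t → EuclideanSpace ℝ (Fin T))
    (hv : ∀ i, v i = α • EuclideanSpace.single (e i) (1 : ℝ) +
      β • ∑ j ∈ Finset.univ.erase i, EuclideanSpace.single (e j) (1 : ℝ))
    (xstar : EuclideanSpace ℝ (Fin T))
    (hx : xstar = ((α + ((t : ℝ) - 1) * β) / t) •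
      ∑ i, EuclideanSpace.single (e i) (1 : ℝ)) :
    (Finset.univ.sup' ⟨⟨0, ht⟩, Finset.mem_univ _⟩ fun i => ‖xstar - v i‖ ^ 2) =
        (α - β) ^ 2 * (1 - 1 / t) ∧
    ∀ x : EuclideanSpace ℝ (Fin T),
      (α - β) ^ 2 * (1 - 1 / t) ≤
        Finset.univ.sup' ⟨⟨0, ht⟩, Finset.mem_univ _⟩ fun i => ‖x - v i‖ ^ 2 := by
  set b : Fin t → EuclideanSpace ℝ (Fin T) := fun i => EuclideanSpace.single (e i) 1
  have hb : Orthonormal ℝ b := EuclideanSpace.orthonormal_single.comp e he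
  have hdiff : ∀ i, xstar - v i = (α - β) • ((t : ℝ)⁻¹ • ∑ j, b j - b i) := by
    have hcoef : (α + ((t : ℝ) - 1) * β) / t = β + (α - β) * (t : ℝ)⁻¹ := by
      field_simp
      ring
    intro i
    rw [hv i, hx, hcoef, ← add_sum_erase _ _ (mem_univ i)]
    module
  have hdist : ∀ i, ‖xstar - v i‖ ^ 2 = (α - β) ^ 2 * (1 - 1 / t) := fun i => by
    have hunit := hb.norm_inv_card_smul_sum_sub_sq i
    rw [Fintype.card_fin] at hunit
    rw [hdiff, norm_smul, mul_pow, Real.norm_eq_abs, sq_abs, hunit]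
  have hcentroid : ∑ i, (xstar - v i) = 0 := by
    have : Nonempty (Fin t) := ⟨⟨0, ht⟩⟩
    have hmean := sum_inv_card_smul_sum_sub_eq_zero b
    rw [Fintype.card_fin] at hmean
    rw [sum_congr rfl fun i _ => hdiff i, ← smul_sum, hmean, smul_zero]
  refine ⟨?_, le_sup'_norm_sub_sq_of_sum_sub_eq_zero _ v hcentroid fun i _ => hdist i⟩
  simp_rw [hdist]
  exact sup'_const _ _

/-- Minimum enclosing ball of the symmetric simplex configuration
v_i = α e_i + β ∑_{j≠i} e_j : the symmetric point is a center and the optimal squared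
radius is (α-β)²(1-1/t). -/
theorem meb_symmetric_simplex (t T : ℕ) (ht : 0 < t) (hT : t < T) (α β : ℝ)
    (hβ : 0 ≤ β) (hαβ : β ≤ α) (e : Fin t → Fin T) (he : Function.Injective e)
    (v : Fin t → EuclideanSpace ℝ (Fin T))
    (hv : ∀ i, v i = α • EuclideanSpace.single (e i) (1 : ℝ) +
      β • ∑ j ∈ Finset.univ.erase i, EuclideanSpace.single (e j) (1 : ℝ))
    (xstar : EuclideanSpace ℝ (Fin T))
    (hx : xstar = ((α + ((t : ℝ) - 1) * β) / t) •
      ∑ i, EuclideanSpace.single (e i) (1 : ℝ)) :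
    (Finset.univ.sup' ⟨⟨0, ht⟩, Finset.mem_univ _⟩ fun i => ‖xstar - v i‖ ^ 2) =
        (α - β) ^ 2 * (1 - 1 / t) ∧
    ∀ x : EuclideanSpace ℝ (Fin T),
      (α - β) ^ 2 * (1 - 1 / t) ≤
        Finset.univ.sup' ⟨⟨0, ht⟩, Finset.mem_univ _⟩ fun i => ‖x - v i‖ ^ 2 :=
  meb_symmetric_simplex_general t T ht α β e he v hv xstar hx
end
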